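/- Let α, γ > 0. In the Lie algebra g^J₁(ℝ) = span_ℝ{F,G,H,P,Q,R} of 4×4 real matrices, set e₁ = √α(F+G), e₂ = 2√α H, e₄ = (1/√γ)P, e₅ = (1/√γ)Q, and let m = span_ℝ{e₁,e₂,e₄,e₅}, h = span_ℝ{F−G, R}. Then g^J₁(ℝ) = m ⊕ h, [h,m] ⊆ m (so the Siegel–Jacobi upper half-plane X₁^J = G^J₁(ℝ)/(SO(2)×ℝ) is reductive), but [m,m] ⊄ h, and there exist X, Y, Z ∈ m such that B([Z,X]_m, Y) + B(X, [Z,Y]_m) ≠ 0, where B is the inner product on m making (e₁,e₂,e₄,e₅) orthonormal and W_m denotes the m-component of W in the decomposition g^J₁(ℝ) = m ⊕ h. Consequently X₁^J with the balanced metric is a reductive, non-symmetric space that is not naturally reductive with respect to this decomposition. -/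

import Mathlib

open Matrix

/-- Generator `F` of the Jacobi Lie algebra `g^J₁(ℝ) ⊆ M(4,ℝ)`. -/
noncomputable def Fj : Matrix (Fin 4) (Fin 4) ℝ :=
  !![0,0,1,0; 0,0,0,0; 0,0,0,0; 0,0,0,0]

/-- Generator `G`. -/
noncomputable def Gj : Matrix (Fin 4) (Fin 4) ℝ :=
  !![0,0,0,0; 0,0,0,0; 1,0,0,0; 0,0,0,0]

/-- Generator `H`. -/
noncomputable def Hj : Matrix (Fin 4) (Fin 4) ℝ :=
  !![1,0,0,0; 0,0,0,0; 0,0,-1,0; 0,0,0,0]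

/-- Generator `P`. -/
noncomputable def Pj : Matrix (Fin 4) (Fin 4) ℝ :=
  !![0,0,0,0; 1,0,0,0; 0,0,0,-1; 0,0,0,0]

/-- Generator `Q`. -/
noncomputable def Qj : Matrix (Fin 4) (Fin 4) ℝ :=
  !![0,0,0,1; 0,0,1,0; 0,0,0,0; 0,0,0,0]

/-- Generator `R`. -/
noncomputable def Rj : Matrix (Fin 4) (Fin 4) ℝ :=
  !![0,0,0,0; 0,0,0,1; 0,0,0,0; 0,0,0,0]

/-- The orthonormal basis `(e₁, e₂, e₄, e₅)` of `m`:
`e₁ = √α(F+G)`, `e₂ = 2√α·H`, `e₄ = (1/√γ)P`, `e₅ = (1/√γ)Q`. -/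
noncomputable def Ebasis (α γ : ℝ) : Fin 4 → Matrix (Fin 4) (Fin 4) ℝ :=
  ![Real.sqrt α • (Fj + Gj), (2 * Real.sqrt α) • Hj,
    (Real.sqrt γ)⁻¹ • Pj, (Real.sqrt γ)⁻¹ • Qj]

/-- The subspace `m = span{e₁,e₂,e₄,e₅}`. -/
noncomputable def mSub (α γ : ℝ) : Submodule ℝ (Matrix (Fin 4) (Fin 4) ℝ) :=
  Submodule.span ℝ (Set.range (Ebasis α γ))

/-- The subspace `h = span{F−G, R}`. -/
noncomputable def hSub : Submodule ℝ (Matrix (Fin 4) (Fin 4) ℝ) :=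
  Submodule.span ℝ {Fj - Gj, Rj}

/-!
After rescaling, `m = span{F+G, H, P, Q}`. The element `F - G` acts on `m` by rotating
`F+G ↔ H` and `P ↔ Q`, and `R` is central, so `[h, m] ⊆ m`; but `[F+G, P] = -Q ∉ h`.
Finally `ad e₂` has the eigenvector `e₄` with the nonzero eigenvalue `-2√α`, which is
incompatible with skew-symmetry with respect to `B`.
-/

open Submodule

theorem span_add_sup_span_sub {K V : Type*} [Field K] [AddCommGroup V] [Module K V]
    (h2 : (2 : K) ≠ 0) (x y : V) : K ∙ (x + y) ⊔ K ∙ (x - y) = K ∙ x ⊔ K ∙ y := by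
  have hx : (2⁻¹ : K) • (x + y) + (2⁻¹ : K) • (x - y) = x := by
    rw [← smul_add, add_add_sub_cancel, ← two_smul K, smul_smul, inv_mul_cancel₀ h2, one_smul]
  have hy : (2⁻¹ : K) • (x + y) + (-2⁻¹ : K) • (x - y) = y := by
    rw [neg_smul, ← sub_eq_add_neg, ← smul_sub, add_sub_sub_cancel, ← two_smul K, smul_smul,
      inv_mul_cancel₀ h2, one_smul]
  refine le_antisymm (sup_le ?_ ?_) (sup_le ?_ ?_) <;> rw [span_singleton_le_iff_mem, mem_sup]
  · exact ⟨x, mem_span_singleton_self x, y, mem_span_singleton_self y, rfl⟩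
  · exact ⟨x, mem_span_singleton_self x, -y, neg_mem (mem_span_singleton_self y),
      (sub_eq_add_neg x y).symm⟩
  · exact ⟨_, smul_mem _ _ (mem_span_singleton_self _), _,
      smul_mem _ _ (mem_span_singleton_self _), hx⟩
  · exact ⟨_, smul_mem _ _ (mem_span_singleton_self _), _,
      smul_mem _ _ (mem_span_singleton_self _), hy⟩

theorem lie_mem_of_mem_span {R L : Type*} [CommRing R] [LieRing L] [LieAlgebra R L]
    {s t : Set L} {M : Submodule R L} (h : ∀ x ∈ s, ∀ y ∈ t, ⁅x, y⁆ ∈ M) {a b : L}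
    (ha : a ∈ span R s) (hb : b ∈ span R t) : ⁅a, b⁆ ∈ M := by
  induction ha, hb using span_induction₂ with
  | mem_mem x y hx hy => exact h x hx y hy
  | zero_left => simp
  | zero_right => simp
  | add_left _ _ _ _ _ _ h₁ h₂ => rw [add_lie]; exact add_mem h₁ h₂
  | add_right _ _ _ _ _ _ h₁ h₂ => rw [lie_add]; exact add_mem h₁ h₂
  | smul_left r _ _ _ _ h => rw [smul_lie]; exact smul_mem _ r h
  | smul_right r _ _ _ _ h => rw [lie_smul]; exact smul_mem _ r h

attribute [local instance] LieRing.ofAssociativeRing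

theorem lie_Fj_sub_Gj_Fj_add_Gj : ⁅Fj - Gj, Fj + Gj⁆ = (2 : ℝ) • Hj := by
  ext i j; fin_cases i <;> fin_cases j <;>
    norm_num [Ring.lie_def, Fj, Gj, Hj, Matrix.mul_apply, Fin.sum_univ_four]

theorem lie_Fj_sub_Gj_Hj : ⁅Fj - Gj, Hj⁆ = (-2 : ℝ) • (Fj + Gj) := by
  ext i j; fin_cases i <;> fin_cases j <;>
    norm_num [Ring.lie_def, Fj, Gj, Hj, Matrix.mul_apply, Fin.sum_univ_four]

theorem lie_Fj_sub_Gj_Pj : ⁅Fj - Gj, Pj⁆ = -Qj := by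
  ext i j; fin_cases i <;> fin_cases j <;>
    norm_num [Ring.lie_def, Fj, Gj, Pj, Qj, Matrix.mul_apply, Fin.sum_univ_four]

theorem lie_Fj_sub_Gj_Qj : ⁅Fj - Gj, Qj⁆ = Pj := by
  ext i j; fin_cases i <;> fin_cases j <;>
    norm_num [Ring.lie_def, Fj, Gj, Pj, Qj, Matrix.mul_apply, Fin.sum_univ_four]

theorem lie_Fj_add_Gj_Pj : ⁅Fj + Gj, Pj⁆ = -Qj := by
  ext i j; fin_cases i <;> fin_cases j <;>
    norm_num [Ring.lie_def, Fj, Gj, Pj, Qj, Matrix.mul_apply, Fin.sum_univ_four]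

theorem lie_Hj_Pj : ⁅Hj, Pj⁆ = -Pj := by
  ext i j; fin_cases i <;> fin_cases j <;>
    norm_num [Ring.lie_def, Hj, Pj, Matrix.mul_apply, Fin.sum_univ_four]

theorem lie_Rj_eq_zero {X : Matrix (Fin 4) (Fin 4) ℝ}
    (hX : X ∈ ({Fj + Gj, Hj, Pj, Qj} : Set (Matrix (Fin 4) (Fin 4) ℝ))) : ⁅Rj, X⁆ = 0 := by
  rcases hX with rfl | rfl | rfl | rfl <;> ext i j <;> fin_cases i <;> fin_cases j <;>
    norm_num [Ring.lie_def, Fj, Gj, Hj, Pj, Qj, Rj, Matrix.mul_apply, Fin.sum_univ_four]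

theorem mSub_eq_span {α γ : ℝ} (hα : 0 < α) (hγ : 0 < γ) :
    mSub α γ = span ℝ {Fj + Gj, Hj, Pj, Qj} := by
  have hs : 0 < √α := Real.sqrt_pos.mpr hα
  have ht : 0 < √γ := Real.sqrt_pos.mpr hγ
  simp only [mSub, Ebasis, Matrix.range_cons, Matrix.range_empty, Set.union_empty,
    Set.singleton_union, span_insert, span_singleton_smul_eq hs.ne'.isUnit,
    span_singleton_smul_eq (by positivity : 2 * √α ≠ 0).isUnit,
    span_singleton_smul_eq (inv_pos.mpr ht).ne'.isUnit]

theorem span_sup_hSub :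
    span ℝ {Fj + Gj, Hj, Pj, Qj} ⊔ hSub = span ℝ {Fj, Gj, Hj, Pj, Qj, Rj} := by
  simp only [hSub, span_insert]
  rw [← sup_assoc (ℝ ∙ Fj), ← span_add_sup_span_sub two_ne_zero Fj Gj]
  ac_rfl

theorem entry_eq_of_mem_span {X : Matrix (Fin 4) (Fin 4) ℝ}
    (hX : X ∈ span ℝ {Fj + Gj, Hj, Pj, Qj}) : X 0 2 = X 2 0 ∧ X 1 3 = 0 := by
  induction hX using span_induction with
  | mem x hx => rcases hx with rfl | rfl | rfl | rfl <;> simp [Fj, Gj, Hj, Pj, Qj]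
  | zero => simp
  | add x y _ _ hx hy => simp [hx.1, hx.2, hy.1, hy.2]
  | smul a x _ hx => simp [hx.1, hx.2]

theorem span_inf_hSub : span ℝ {Fj + Gj, Hj, Pj, Qj} ⊓ hSub = ⊥ := by
  rw [eq_bot_iff]
  rintro X ⟨hm, hh⟩
  obtain ⟨a, b, rfl⟩ := mem_span_pair.mp hh
  obtain ⟨ha, rfl⟩ : a = -a ∧ b = 0 := by simpa [Fj, Gj, Rj] using entry_eq_of_mem_span hm
  simp [self_eq_neg.mp ha]

theorem lie_hSub_mem_span {A B : Matrix (Fin 4) (Fin 4) ℝ} (hA : A ∈ hSub)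
    (hB : B ∈ span ℝ {Fj + Gj, Hj, Pj, Qj}) : ⁅A, B⁆ ∈ span ℝ {Fj + Gj, Hj, Pj, Qj} := by
  refine lie_mem_of_mem_span ?_ hA hB
  rintro x (rfl | rfl) y hy
  · rcases hy with rfl | rfl | rfl | rfl
    · rw [lie_Fj_sub_Gj_Fj_add_Gj]; exact smul_mem _ _ (subset_span (by simp))
    · rw [lie_Fj_sub_Gj_Hj]; exact smul_mem _ _ (subset_span (by simp))
    · rw [lie_Fj_sub_Gj_Pj]; exact neg_mem (subset_span (by simp))
    · rw [lie_Fj_sub_Gj_Qj]; exact subset_span (by simp)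
  · rw [lie_Rj_eq_zero hy]; exact zero_mem _

theorem Qj_notMem_hSub : Qj ∉ hSub := by
  intro h
  obtain ⟨a, b, hab⟩ := mem_span_pair.mp h
  simpa [Fj, Gj, Qj, Rj] using congr_fun₂ hab 1 2

theorem lie_Ebasis_one_two (α γ : ℝ) :
    ⁅Ebasis α γ 1, Ebasis α γ 2⁆ = (-(2 * √α)) • Ebasis α γ 2 := by
  simp only [Ebasis, Matrix.cons_val_one, Matrix.cons_val_two, Matrix.cons_val_zero,
    Matrix.head_cons, Matrix.tail_cons, smul_lie, lie_smul, lie_Hj_Pj]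
  module

/-- The Siegel–Jacobi upper half-plane `X₁^J = G^J₁(ℝ)/(SO(2)×ℝ)` with the balanced
metric is reductive and non-symmetric, but not naturally reductive:
`g^J₁(ℝ) = m ⊕ h`, `[h,m] ⊆ m`, `[m,m] ⊄ h`, and there exist `X, Y, Z ∈ m`
(written in the orthonormal basis `e₁,e₂,e₄,e₅` of `m`, with the brackets `[Z,X]`,
`[Z,Y]` decomposed along `g^J₁(ℝ) = m ⊕ h`) such that
`B([Z,X]_m, Y) + B(X, [Z,Y]_m) ≠ 0`, where `B` makes `(e₁,e₂,e₄,e₅)`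
orthonormal. -/
theorem siegel_jacobi_not_naturally_reductive (α γ : ℝ)
    (hα : 0 < α) (hγ : 0 < γ) :
    (mSub α γ ⊔ hSub =
      Submodule.span ℝ ({Fj, Gj, Hj, Pj, Qj, Rj} : Set (Matrix (Fin 4) (Fin 4) ℝ))) ∧
    (mSub α γ ⊓ hSub = ⊥) ∧
    (∀ A ∈ hSub, ∀ B ∈ mSub α γ, A * B - B * A ∈ mSub α γ) ∧
    ¬ (∀ A ∈ mSub α γ, ∀ B ∈ mSub α γ, A * B - B * A ∈ hSub) ∧
    (∃ x y z cZX cZY : Fin 4 → ℝ, ∃ dZX dZY : Fin 2 → ℝ,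
      ((∑ i, z i • Ebasis α γ i) * (∑ i, x i • Ebasis α γ i) -
          (∑ i, x i • Ebasis α γ i) * (∑ i, z i • Ebasis α γ i) =
        (∑ i, cZX i • Ebasis α γ i) + dZX 0 • (Fj - Gj) + dZX 1 • Rj) ∧
      ((∑ i, z i • Ebasis α γ i) * (∑ i, y i • Ebasis α γ i) -
          (∑ i, y i • Ebasis α γ i) * (∑ i, z i • Ebasis α γ i) =
        (∑ i, cZY i • Ebasis α γ i) + dZY 0 • (Fj - Gj) + dZY 1 • Rj) ∧
      (∑ i, (cZX i * y i + x i * cZY i)) ≠ 0) := by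
  simp only [← Ring.lie_def, mSub_eq_span hα hγ]
  refine ⟨span_sup_hSub, span_inf_hSub, fun A hA B hB ↦ lie_hSub_mem_span hA hB, ?_, ?_⟩
  · intro h
    have := h (Fj + Gj) (subset_span (by simp)) Pj (subset_span (by simp))
    rw [lie_Fj_add_Gj_Pj, neg_mem_iff] at this
    exact Qj_notMem_hSub this
  · -- `X = Y = e₄` and `Z = e₂`, with the basis indexed from `0`
    refine ⟨Pi.single 2 1, Pi.single 2 1, Pi.single 1 1, Pi.single 2 (-(2 * √α)),
      Pi.single 2 (-(2 * √α)), 0, 0, ?_, ?_, ?_⟩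
    · simp [lie_Ebasis_one_two]
    · simp [lie_Ebasis_one_two]
    · simp [Fin.sum_univ_four]
      positivity
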